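/- Let G be a finitely generated group acting properly by isometries on a proper geodesic metric space X, and fix x ∈ X. If the orbit map restricted to a finitely generated subgroup H ≤ G, given by h ↦ h·x, is a quasi-isometric embedding of H into X, and the image H·x is a stable subset of X, then H is undistorted in G. -/

import Mathlib

/-- The word metric on a group G associated with a generating set S. -/
noncomputable def WordDist {G : Type*} [Group G] (S : Set G) (g h : G) : ℝ :=
  sInf {r : ℝ | ∃ l : List G, (∀ x ∈ l, x ∈ S ∨ x⁻¹ ∈ S) ∧ g⁻¹ * h = l.prod ∧
    r = l.length}

/-- A geodesic metric space. -/
def IsGeodesicSpace (X : Type*) [MetricSpace X] : Prop :=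
  ∀ x y : X, ∃ f : ℝ → X, f 0 = x ∧ f (dist x y) = y ∧
    ∀ s ∈ Set.Icc 0 (dist x y), ∀ t ∈ Set.Icc 0 (dist x y), dist (f s) (f t) = |s - t|

/-- A (κ,κ)-quasigeodesic segment on [0,T] with respect to a distance function d. -/
def IsQG {A : Type*} (d : A → A → ℝ) (κ T : ℝ) (q : ℝ → A) : Prop :=
  ∀ s ∈ Set.Icc 0 T, ∀ t ∈ Set.Icc 0 T,
    κ⁻¹ * |s - t| - κ ≤ d (q s) (q t) ∧ d (q s) (q t) ≤ κ * |s - t| + κ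

/-- Y is a stable subset: quasigeodesics with common endpoints in Y uniformly
fellow travel. -/
def StableSubset {A : Type*} (d : A → A → ℝ) (Y : Set A) : Prop :=
  ∀ κ : ℝ, 1 ≤ κ → ∃ D : ℝ, 0 ≤ D ∧
    ∀ (T T' : ℝ) (q q' : ℝ → A), 0 ≤ T → 0 ≤ T' →
      IsQG d κ T q → IsQG d κ T' q' →
      q 0 = q' 0 → q T = q' T' → q 0 ∈ Y → q T ∈ Y →
      (∀ s ∈ Set.Icc 0 T, ∃ t ∈ Set.Icc 0 T', d (q s) (q' t) ≤ D) ∧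
      (∀ t ∈ Set.Icc 0 T', ∃ s ∈ Set.Icc 0 T, d (q s) (q' t) ≤ D)

/-- A quasi-isometric embedding between sets with distance functions. -/
def QIEmb {A B : Type*} (dA : A → A → ℝ) (dB : B → B → ℝ) (f : A → B) : Prop :=
  ∃ κ lam : ℝ, 1 ≤ κ ∧ 0 ≤ lam ∧ ∀ a a' : A,
    κ⁻¹ * dA a a' - lam ≤ dB (f a) (f a') ∧ dB (f a) (f a') ≤ κ * dA a a' + lam

/-! ### Auxiliary lemmas about the word metric -/

/-- Every element of a group generated by `s` is a product of letters from `s ∪ s⁻¹`. -/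
theorem exists_word_of_mem_closure {G : Type*} [Group G] {s : Set G} {a : G}
    (h : a ∈ Subgroup.closure s) :
    ∃ l : List G, (∀ x ∈ l, x ∈ s ∨ x⁻¹ ∈ s) ∧ l.prod = a := by
  induction h using Subgroup.closure_induction with
  | mem x hx => exact ⟨[x], by simp [hx], by simp⟩
  | one => exact ⟨[], by simp, by simp⟩
  | mul x y _ _ hx hy =>
    obtain ⟨l1, h1, p1⟩ := hx
    obtain ⟨l2, h2, p2⟩ := hy
    refine ⟨l1 ++ l2, ?_, by rw [List.prod_append, p1, p2]⟩
    intro z hz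
    rcases List.mem_append.mp hz with h | h
    · exact h1 z h
    · exact h2 z h
  | inv x _ hx =>
    obtain ⟨l, h1, p1⟩ := hx
    refine ⟨(l.reverse.map Inv.inv), ?_, ?_⟩
    · intro z hz
      obtain ⟨y, hy, rfl⟩ := List.mem_map.mp hz
      rcases h1 y (List.mem_reverse.mp hy) with h|h
      · right; simpa using h
      · left; exact h
    · rw [← p1, List.prod_inv_reverse, List.map_reverse]

theorem wordSet_bddBelow {G : Type*} [Group G] (S : Set G) (g h : G) :
    BddBelow {r : ℝ | ∃ l : List G, (∀ x ∈ l, x ∈ S ∨ x⁻¹ ∈ S) ∧ g⁻¹ * h = l.prod ∧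
      r = l.length} := by
  refine ⟨0, ?_⟩
  rintro r ⟨l, -, -, rfl⟩
  positivity

theorem wordDist_le {G : Type*} [Group G] (S : Set G) (g h : G) (l : List G)
    (hl : ∀ x ∈ l, x ∈ S ∨ x⁻¹ ∈ S) (hp : g⁻¹ * h = l.prod) :
    WordDist S g h ≤ l.length :=
  csInf_le (wordSet_bddBelow S g h) ⟨l, hl, hp, rfl⟩

theorem wordDist_nonneg {G : Type*} [Group G] (S : Set G) (g h : G) :
    0 ≤ WordDist S g h :=
  Real.sInf_nonneg (by rintro r ⟨l, -, -, rfl⟩; positivity)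

/-- When `S` generates `G`, the word distance is attained by a word of minimal length. -/
theorem wordDist_exists {G : Type*} [Group G] {S : Set G}
    (hS : Subgroup.closure S = ⊤) (g h : G) :
    ∃ l : List G, (∀ x ∈ l, x ∈ S ∨ x⁻¹ ∈ S) ∧ g⁻¹ * h = l.prod ∧
      WordDist S g h = l.length := by
  have hmem : g⁻¹ * h ∈ Subgroup.closure S := by rw [hS]; trivial
  obtain ⟨l0, hl0, hp0⟩ := exists_word_of_mem_closure hmem
  have hP : ∃ n : ℕ, ∃ l : List G, (∀ x ∈ l, x ∈ S ∨ x⁻¹ ∈ S) ∧ g⁻¹ * h = l.prod ∧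
      l.length = n := ⟨l0.length, l0, hl0, hp0.symm, rfl⟩
  classical
  obtain ⟨l, hl, hp, hlen⟩ := Nat.find_spec hP
  refine ⟨l, hl, hp, le_antisymm (wordDist_le S g h l hl hp) ?_⟩
  rw [hlen]
  refine le_csInf ⟨(l0.length : ℝ), l0, hl0, hp0.symm, rfl⟩ ?_
  rintro r ⟨l', hl', hp', rfl⟩
  exact_mod_cast Nat.find_min' hP ⟨l', hl', hp', rfl⟩

/-- The orbit map is Lipschitz for words with uniformly displaced letters. -/
theorem dist_prod_smul {G : Type*} [Group G] {X : Type*} [MetricSpace X] [MulAction G X]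
    (hiso : ∀ g : G, Isometry (fun x : X => g • x)) (x : X) (C : ℝ)
    (l : List G) (hl : ∀ s ∈ l, dist (s • x) x ≤ C) :
    dist (l.prod • x) x ≤ C * l.length := by
  induction l with
  | nil => simp
  | cons a t ih =>
    have h2 : dist ((a * t.prod) • x) (a • x) = dist (t.prod • x) x := by
      rw [mul_smul]; exact (hiso a).dist_eq _ _
    have h3 : dist (t.prod • x) x ≤ C * t.length := ih (fun s hs => hl s (List.mem_cons_of_mem a hs))
    have h4 : dist (a • x) x ≤ C := hl a List.mem_cons_self
    calc dist ((a :: t).prod • x) x ≤ dist ((a * t.prod) • x) (a • x) + dist (a • x) x := by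
          rw [List.prod_cons]; exact dist_triangle _ _ _
      _ ≤ C * t.length + C := by rw [h2]; linarith
      _ = C * (a :: t).length := by push_cast [List.length_cons]; ring

/-- Length bound for concatenated words. -/
theorem flatten_length_le {α β : Type*} (w : α → List β) (M : ℝ) :
    ∀ l : List α, (∀ s ∈ l, ((w s).length : ℝ) ≤ M) →
      (((l.map w).flatten).length : ℝ) ≤ M * l.length := by
  intro l
  induction l with
  | nil => simp
  | cons a t ih =>
    intro hl
    have ha : ((w a).length : ℝ) ≤ M := hl a List.mem_cons_self
    have ht : (((t.map w).flatten).length : ℝ) ≤ M * t.length :=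
      ih (fun s hs => hl s (List.mem_cons_of_mem a hs))
    simp only [List.map_cons, List.flatten_cons, List.length_append, List.length_cons]
    push_cast
    linarith

/-- If a finitely generated group G acts properly by isometries on a
proper geodesic metric space X, H ≤ G is finitely generated, the orbit map h ↦ h·x
is a quasi-isometric embedding of H into X, and the orbit H·x is a stable subset of
X, then H is undistorted in G. -/
theorem stmt_7 {G : Type*} [Group G] {X : Type*} [MetricSpace X] [ProperSpace X]
    (hgeo : IsGeodesicSpace X) [MulAction G X]
    (hiso : ∀ g : G, Isometry (fun x : X => g • x))
    (hproper : ∀ K : Set X, IsCompact K →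
      {g : G | ((fun x => g • x) '' K ∩ K).Nonempty}.Finite)
    (SG : Set G) (hSGf : SG.Finite) (hSGg : Subgroup.closure SG = ⊤)
    (H : Subgroup G) (SH : Set H) (hSHf : SH.Finite)
    (hSHg : Subgroup.closure SH = ⊤)
    (x : X)
    (horb_qie : QIEmb (WordDist SH) (fun a b : X => dist a b)
      (fun h : H => (h : G) • x))
    (hstable : StableSubset (fun a b : X => dist a b)
      ((fun g : G => g • x) '' (H : Set G))) :
    QIEmb (WordDist SH) (WordDist SG) (fun h : H => (h : G)) := by
  classical
  obtain ⟨κ, lam, hκ, hlam, hqie⟩ := horb_qie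
  -- A bound C on the displacement of generators of G
  set TG : Set G := SG ∪ (Inv.inv '' SG) with hTG
  have hTGf : TG.Finite := hSGf.union (hSGf.image _)
  obtain ⟨C0, hC0⟩ := (hTGf.image (fun s => dist (s • x) x)).bddAbove
  set C : ℝ := max C0 1 with hC
  have hC1 : (1 : ℝ) ≤ C := le_max_right _ _
  have hCd : ∀ s : G, (s ∈ SG ∨ s⁻¹ ∈ SG) → dist (s • x) x ≤ C := by
    intro s hs
    have hsT : s ∈ TG := by
      rcases hs with h | h
      · exact Or.inl h
      · exact Or.inr ⟨s⁻¹, h, inv_inv s⟩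
    exact le_trans (hC0 ⟨s, hsT, rfl⟩) (le_max_left _ _)
  -- For each generator of H choose an SG-word; M bounds their lengths
  have hw : ∀ s : H, ∃ l : List G, (∀ y ∈ l, y ∈ SG ∨ y⁻¹ ∈ SG) ∧ (s : G) = l.prod := by
    intro s
    have : (s : G) ∈ Subgroup.closure SG := by rw [hSGg]; trivial
    obtain ⟨l, h1, h2⟩ := exists_word_of_mem_closure this
    exact ⟨l, h1, h2.symm⟩
  choose w hw1 hw2 using hw
  set TH : Set H := SH ∪ (Inv.inv '' SH) with hTH
  have hTHf : TH.Finite := hSHf.union (hSHf.image _)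
  obtain ⟨M0, hM0⟩ := (hTHf.image (fun s => ((w s).length : ℝ))).bddAbove
  set M : ℝ := max M0 1 with hM
  have hM1 : (1 : ℝ) ≤ M := le_max_right _ _
  have hMd : ∀ s : H, (s ∈ SH ∨ s⁻¹ ∈ SH) → ((w s).length : ℝ) ≤ M := by
    intro s hs
    have hsT : s ∈ TH := by
      rcases hs with h | h
      · exact Or.inl h
      · exact Or.inr ⟨s⁻¹, h, inv_inv s⟩
    exact le_trans (hM0 ⟨s, hsT, rfl⟩) (le_max_left _ _)
  -- Key inequality 1 : WordDist SG ≤ M * WordDist SH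
  have key1 : ∀ a b : H, WordDist SG (a : G) (b : G) ≤ M * WordDist SH a b := by
    intro a b
    obtain ⟨l, hl, hp, hd⟩ := wordDist_exists hSHg a b
    have hjoin : ((a : G))⁻¹ * (b : G) = ((l.map w).flatten).prod := by
      rw [List.prod_flatten, List.map_map]
      have h1 : List.map (List.prod ∘ w) l = List.map (H.subtype) l := by
        apply List.map_congr_left
        intro s _
        simp only [Function.comp_apply, ← hw2 s, Subgroup.coe_subtype]
      rw [h1, List.prod_hom l H.subtype, ← hp]
      simp [Subgroup.coe_subtype]
    have hlet : ∀ y ∈ (l.map w).flatten, y ∈ SG ∨ y⁻¹ ∈ SG := by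
      intro y hy
      obtain ⟨L, hL, hyL⟩ := List.mem_flatten.mp hy
      obtain ⟨s, hs, rfl⟩ := List.mem_map.mp hL
      exact hw1 s y hyL
    have hlen : (((l.map w).flatten).length : ℝ) ≤ M * l.length :=
      flatten_length_le w M l (fun s hs => hMd s (hl s hs))
    calc WordDist SG (a : G) (b : G) ≤ (((l.map w).flatten).length : ℝ) :=
          wordDist_le _ _ _ _ hlet hjoin
      _ ≤ M * l.length := hlen
      _ = M * WordDist SH a b := by rw [hd]
  -- Key inequality 2 : WordDist SH ≤ κ*C * WordDist SG + κ*lam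
  have key2 : ∀ a b : H, WordDist SH a b ≤ κ * C * WordDist SG (a : G) (b : G) + κ * lam := by
    intro a b
    obtain ⟨l, hl, hp, hd⟩ := wordDist_exists hSGg (a : G) (b : G)
    have hdist : dist ((a : G) • x) ((b : G) • x) ≤ C * WordDist SG (a : G) (b : G) := by
      have h1 : dist ((a : G) • x) ((b : G) • x) = dist (((a : G)⁻¹ * (b : G)) • x) x := by
        have := (hiso ((a : G)⁻¹)).dist_eq ((a : G) • x) ((b : G) • x)
        rw [← this, ← mul_smul, ← mul_smul, inv_mul_cancel, one_smul, dist_comm]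
      rw [h1, hp, hd]
      exact dist_prod_smul hiso x C l (fun s hs => hCd s (hl s hs))
    have h2 := (hqie a b).1
    have hκ0 : (0 : ℝ) < κ := lt_of_lt_of_le one_pos hκ
    have h3 : κ⁻¹ * WordDist SH a b - lam ≤ C * WordDist SG (a : G) (b : G) :=
      le_trans h2 hdist
    have h4 : WordDist SH a b ≤ κ * (C * WordDist SG (a : G) (b : G) + lam) := by
      rw [← inv_mul_le_iff₀ hκ0] at *
      linarith [h3]
    linarith [h4]
  -- conclude
  have hC0' : (0 : ℝ) ≤ C := le_trans zero_le_one hC1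
  set κ' : ℝ := max (max (κ * C) M) 1 with hκ'
  have hκ'1 : (1 : ℝ) ≤ κ' := le_max_right _ _
  have hκ'0 : (0 : ℝ) < κ' := lt_of_lt_of_le one_pos hκ'1
  have hκ'M : M ≤ κ' := le_trans (le_max_right _ _) (le_max_left _ _)
  have hκ'C : κ * C ≤ κ' := le_trans (le_max_left _ _) (le_max_left _ _)
  refine ⟨κ', κ * lam, hκ'1, by positivity, ?_⟩
  intro a b
  have d1nn := wordDist_nonneg SH a b
  have d2nn := wordDist_nonneg SG (a : G) (b : G)
  constructor
  · have h5 : WordDist SH a b ≤ κ' * (WordDist SG (a : G) (b : G) + κ * lam) := by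
      have := key2 a b
      have hκlam : (0 : ℝ) ≤ κ * lam := by positivity
      nlinarith [mul_le_mul_of_nonneg_right hκ'C d2nn]
    have h6 : κ'⁻¹ * WordDist SH a b ≤ WordDist SG (a : G) (b : G) + κ * lam := by
      rw [inv_mul_le_iff₀ hκ'0]
      linarith [h5]
    linarith [h6]
  · have h7 : WordDist SG (a : G) (b : G) ≤ κ' * WordDist SH a b := by
      calc WordDist SG (a : G) (b : G) ≤ M * WordDist SH a b := key1 a b
        _ ≤ κ' * WordDist SH a b := mul_le_mul_of_nonneg_right hκ'M d1nn
    have hκlam : (0 : ℝ) ≤ κ * lam := by positivity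
    linarith [h7]
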